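/- arXiv:2201.07919 — 6 statements merged into one kernel-verified Lean document; each statement's English description precedes it below -/
import Mathlib

section
/- For positive β, the solution of the ODE ψ'(p) = (x − iħ(β/m²)p) / (iħ(1 + (β/m²)p²)) · ψ(p) on ℝ is ψ(p) = A · exp(−i x m arctan(p√β/m)/(ħ√β)) / √(m² + βp²) for some constant A. -/
open Real Complex

/-- For positive β, every solution of the ODE
`ψ'(p) = (x − i·hbar·(β/m²)p) / (i·hbar·(1 + (β/m²)p²)) · ψ(p)` on ℝ has the form
`ψ(p) = A · exp(−i x m arctan(p√β/m)/(hbar·√β)) / √(m² + βp²)`. -/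
theorem ode_solution_positive_beta
    (hbar m β x : ℝ) (hhbar : 0 < hbar) (hm : 0 < m) (hβ : 0 < β)
    (ψ : ℝ → ℂ)
    (hψ : ∀ p : ℝ, HasDerivAt ψ
      ((((x : ℂ) - Complex.I * hbar * (β / m ^ 2) * p) /
        (Complex.I * hbar * (1 + (β / m ^ 2) * p ^ 2))) * ψ p) p) :
    ∃ A : ℂ, ∀ p : ℝ,
      ψ p = A * Complex.exp (-Complex.I * x * m *
              (Real.arctan (p * Real.sqrt β / m)) / (hbar * Real.sqrt β)) /
            (Real.sqrt (m ^ 2 + β * p ^ 2) : ℂ) := by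
  obtain ⟨s, hs, rfl⟩ : ∃ s : ℝ, 0 < s ∧ s ^ 2 = β :=
    ⟨Real.sqrt β, Real.sqrt_pos.mpr hβ, Real.sq_sqrt hβ.le⟩
  have hss : Real.sqrt (s ^ 2) = s := Real.sqrt_sq hs.le
  rw [hss] at *
  have hDpos : ∀ p : ℝ, 0 < m ^ 2 + s ^ 2 * p ^ 2 := fun p => by positivity
  set w : ℝ → ℂ := fun p =>
    ((Real.log (m ^ 2 + s ^ 2 * p ^ 2) : ℝ) : ℂ) / 2 +
      Complex.I * x * m * ((Real.arctan (p * s / m) : ℝ) : ℂ) / (hbar * s) with hwdef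
  have hw' : ∀ p : ℝ, HasDerivAt w
      ((((m ^ 2 + s ^ 2 * p ^ 2)⁻¹ * (s ^ 2 * (2 * p)) : ℝ) : ℂ) / 2 +
        Complex.I * x * m * (((1 / (1 + (p * s / m) ^ 2)) * (s / m) : ℝ) : ℂ) / (hbar * s)) p := by
    intro p
    have h1 : HasDerivAt (fun p : ℝ => m ^ 2 + s ^ 2 * p ^ 2) (s ^ 2 * (2 * p)) p := by
      simpa using ((hasDerivAt_pow 2 p).const_mul (s ^ 2)).const_add (m ^ 2)
    have hlog := (Real.hasDerivAt_log (hDpos p).ne').comp p h1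
    have h2 : HasDerivAt (fun p : ℝ => p * s / m) (s / m) p := by
      simpa using ((hasDerivAt_id p).mul_const s).div_const m
    have harc := (Real.hasDerivAt_arctan (p * s / m)).comp p h2
    exact (hlog.ofReal_comp.div_const 2).add
      (((harc.ofReal_comp).const_mul (Complex.I * x * m)).div_const ((hbar : ℂ) * s))
  set g : ℝ → ℂ := fun p => ψ p * Complex.exp (w p) with hgdef
  have hg : ∀ p : ℝ, HasDerivAt g 0 p := by
    intro p
    have h := (hψ p).mul ((hw' p).cexp)
    have hm' : (m : ℂ) ≠ 0 := by exact_mod_cast hm.ne'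
    have hh' : (hbar : ℂ) ≠ 0 := by exact_mod_cast hhbar.ne'
    have hs' : (s : ℂ) ≠ 0 := by exact_mod_cast hs.ne'
    have hD' : ((m ^ 2 + s ^ 2 * p ^ 2 : ℝ) : ℂ) ≠ 0 := by
      exact_mod_cast (hDpos p).ne'
    have hE' : (1 : ℂ) + (s : ℂ) ^ 2 / (m : ℂ) ^ 2 * (p : ℂ) ^ 2 ≠ 0 := by
      have : ((1 + s ^ 2 / m ^ 2 * p ^ 2 : ℝ) : ℂ) ≠ 0 := by
        have : (0 : ℝ) < 1 + s ^ 2 / m ^ 2 * p ^ 2 := by positivity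
        exact_mod_cast this.ne'
      push_cast at this
      exact this
    have hF' : (1 : ℂ) + ((p : ℂ) * s / m) ^ 2 ≠ 0 := by
      have : ((1 + (p * s / m) ^ 2 : ℝ) : ℂ) ≠ 0 := by
        have : (0 : ℝ) < 1 + (p * s / m) ^ 2 := by positivity
        exact_mod_cast this.ne'
      push_cast at this
      exact this
    have hIH : Complex.I * hbar * (1 + ((s : ℂ) ^ 2 / (m : ℂ) ^ 2) * (p : ℂ) ^ 2) ≠ 0 :=
      mul_ne_zero (mul_ne_zero Complex.I_ne_zero hh') hE'
    have key : ((x : ℂ) - Complex.I * hbar * (((s ^ 2 : ℝ) : ℂ) / (m : ℂ) ^ 2) * p) /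
          (Complex.I * hbar * (1 + (((s ^ 2 : ℝ) : ℂ) / (m : ℂ) ^ 2) * (p : ℂ) ^ 2)) +
        ((((m ^ 2 + s ^ 2 * p ^ 2)⁻¹ * (s ^ 2 * (2 * p)) : ℝ) : ℂ) / 2 +
          Complex.I * x * m * (((1 / (1 + (p * s / m) ^ 2)) * (s / m) : ℝ) : ℂ) / (hbar * s)) = 0 := by
      have hD2 : ((m : ℂ) ^ 2 + (s : ℂ) ^ 2 * (p : ℂ) ^ 2) ≠ 0 := by push_cast at hD'; exact hD'
      have hG : ((m : ℂ) * (s : ℂ) ^ 3 * (p : ℂ) ^ 2 * (hbar : ℂ) + (m : ℂ) ^ 3 * (s : ℂ) * (hbar : ℂ)) ≠ 0 := by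
        have : ((m * s ^ 3 * p ^ 2 * hbar + m ^ 3 * s * hbar : ℝ) : ℂ) ≠ 0 := by
          have : (0 : ℝ) < m * s ^ 3 * p ^ 2 * hbar + m ^ 3 * s * hbar := by positivity
          exact_mod_cast this.ne'
        push_cast at this
        exact this
      push_cast
      field_simp [hm', hh', hs', hD2, hE', hF', hG, Complex.I_ne_zero]
      have hG2 : ((m : ℂ) * (hbar : ℂ) * (s : ℂ) ^ 3 * (p : ℂ) ^ 2 + (m : ℂ) ^ 3 * (hbar : ℂ) * (s : ℂ)) ≠ 0 := by
        have : ((m * hbar * s ^ 3 * p ^ 2 + m ^ 3 * hbar * s : ℝ) : ℂ) ≠ 0 := by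
          have : (0 : ℝ) < m * hbar * s ^ 3 * p ^ 2 + m ^ 3 * hbar * s := by positivity
          exact_mod_cast this.ne'
        push_cast at this
        exact this
      ring_nf
      simp only [Complex.I_sq]
      field_simp [hG2]
      ring
    have heq : ((x : ℂ) - Complex.I * hbar * (((s ^ 2 : ℝ) : ℂ) / (m : ℂ) ^ 2) * p) /
          (Complex.I * hbar * (1 + (((s ^ 2 : ℝ) : ℂ) / (m : ℂ) ^ 2) * (p : ℂ) ^ 2)) * ψ p *
          Complex.exp (w p) +
        ψ p * (Complex.exp (w p) *
          ((((m ^ 2 + s ^ 2 * p ^ 2)⁻¹ * (s ^ 2 * (2 * p)) : ℝ) : ℂ) / 2 +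
            Complex.I * x * m * (((1 / (1 + (p * s / m) ^ 2)) * (s / m) : ℝ) : ℂ) / (hbar * s))) = 0 := by
      have expand : ((x : ℂ) - Complex.I * hbar * (((s ^ 2 : ℝ) : ℂ) / (m : ℂ) ^ 2) * p) /
          (Complex.I * hbar * (1 + (((s ^ 2 : ℝ) : ℂ) / (m : ℂ) ^ 2) * (p : ℂ) ^ 2)) * ψ p *
          Complex.exp (w p) +
        ψ p * (Complex.exp (w p) *
          ((((m ^ 2 + s ^ 2 * p ^ 2)⁻¹ * (s ^ 2 * (2 * p)) : ℝ) : ℂ) / 2 +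
            Complex.I * x * m * (((1 / (1 + (p * s / m) ^ 2)) * (s / m) : ℝ) : ℂ) / (hbar * s))) =
        ψ p * Complex.exp (w p) *
          (((x : ℂ) - Complex.I * hbar * (((s ^ 2 : ℝ) : ℂ) / (m : ℂ) ^ 2) * p) /
            (Complex.I * hbar * (1 + (((s ^ 2 : ℝ) : ℂ) / (m : ℂ) ^ 2) * (p : ℂ) ^ 2)) +
          ((((m ^ 2 + s ^ 2 * p ^ 2)⁻¹ * (s ^ 2 * (2 * p)) : ℝ) : ℂ) / 2 +
            Complex.I * x * m * (((1 / (1 + (p * s / m) ^ 2)) * (s / m) : ℝ) : ℂ) / (hbar * s))) := by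
        ring
      rw [expand, key, mul_zero]
    exact heq ▸ h
  have hconst : ∀ p : ℝ, g p = g 0 :=
    fun p => is_const_of_deriv_eq_zero
      (fun q => (hg q).differentiableAt) (fun q => (hg q).deriv) p 0
  refine ⟨g 0, fun p => ?_⟩
  have hψp : ψ p = g 0 * Complex.exp (-(w p)) := by
    rw [← hconst p, hgdef]
    simp [Complex.exp_neg, mul_assoc, Complex.exp_ne_zero, mul_inv_cancel₀]
  have hsqrt : ((Real.sqrt (m ^ 2 + s ^ 2 * p ^ 2) : ℝ) : ℂ) =
      Complex.exp (((Real.log (m ^ 2 + s ^ 2 * p ^ 2) : ℝ) : ℂ) / 2) := by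
    have h1 : Real.sqrt (m ^ 2 + s ^ 2 * p ^ 2) =
        Real.exp (Real.log (m ^ 2 + s ^ 2 * p ^ 2) / 2) := by
      rw [← Real.log_sqrt (hDpos p).le,
        Real.exp_log (Real.sqrt_pos.mpr (hDpos p))]
    rw [h1, Complex.ofReal_exp]
    norm_cast
  rw [hψp, hsqrt, mul_div_assoc, ← Complex.exp_sub]
  congr 1
  simp only [hwdef]
  push_cast
  ring
end

section
/- For positive β and any x, x' ∈ ℝ, ∫_ℝ ψ_x(p)* ψ_{x'}(p) dp = (2ħ√β/(mπ(x'−x))) · sin(mπ(x'−x)/(2ħ√β)) when x ≠ x', where ψ_x(p) = √(m/π) β^{1/4} e^{−ixm arctan(p√β/m)/(ħ√β)} / √(m² + βp²). In particular this inner product vanishes if and only if x' − x is a nonzero integer multiple of 2ħ√β/m. -/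
/-!
Write `θ(p) = arctan (p √β / m)`. Then `|ψ_x(p)|² = θ'(p) / π` and the phase of `ψ_x` is
`-x m θ(p) / (ħ √β)`, so `ψ_x* ψ_{x'} = θ'(p) e^{i k θ(p)} / π` with `k = m (x - x') / (ħ √β)`.
This is an exact derivative, and since `θ` increases from `-π/2` to `π/2` the overlap is
`(e^{i k π/2} - e^{-i k π/2}) / (i k π) = 2 sin (k π / 2) / (k π)`.
-/

open Real Complex MeasureTheory Filter Topology

section PhaseIntegral

variable {θ θ' : ℝ → ℝ} {A B k : ℝ}

theorem integral_deriv_mul_cexp_I_mul (hk : k ≠ 0) (hθ : ∀ p, HasDerivAt θ (θ' p) p)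
    (hθ' : Integrable θ') (hA : Tendsto θ atBot (𝓝 A)) (hB : Tendsto θ atTop (𝓝 B)) :
    ∫ p, (θ' p : ℂ) * cexp (I * k * θ p) = (cexp (I * k * B) - cexp (I * k * A)) / (I * k) := by
  have hIk : I * (k : ℂ) ≠ 0 := mul_ne_zero I_ne_zero (ofReal_ne_zero.mpr hk)
  set F : ℂ → ℂ := fun z => cexp (I * k * z) / (I * k)
  have hF : ∀ p, HasDerivAt (fun p => F (θ p)) ((θ' p : ℂ) * cexp (I * k * θ p)) p := fun p =>
    ((((hθ p).ofReal_comp.const_mul (I * k)).cexp).div_const (I * k)).congr_deriv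
      (by rw [mul_div_assoc, mul_div_cancel_left₀ _ hIk, mul_comm])
  have hint : Integrable fun p => cexp (I * k * θ p) * (θ' p : ℂ) := by
    refine hθ'.ofReal.bdd_mul (c := 1) ?_ (ae_of_all _ fun p => ?_)
    · exact (continuous_exp.comp (continuous_const.mul (continuous_ofReal.comp
        (continuous_iff_continuousAt.mpr fun p => (hθ p).continuousAt)))).aestronglyMeasurable
    · rw [show I * k * θ p = ((k * θ p : ℝ) : ℂ) * I by push_cast; ring, norm_exp_ofReal_mul_I]
  have hFc : Continuous F := by fun_prop
  rw [integral_of_hasDerivAt_of_tendsto hF (by simpa only [mul_comm] using hint)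
    ((hFc.tendsto _).comp (continuous_ofReal.continuousAt.tendsto.comp hA))
    ((hFc.tendsto _).comp (continuous_ofReal.continuousAt.tendsto.comp hB)), sub_div]

end PhaseIntegral

theorem integral_deriv_arctan_mul_cexp_I_mul {c k : ℝ} (hc : 0 < c) (hk : k ≠ 0) :
    ∫ p, ((c / (1 + (c * p) ^ 2) : ℝ) : ℂ) * cexp (I * k * Real.arctan (c * p)) =
      ((2 * Real.sin (k * π / 2) / k : ℝ) : ℂ) := by
  have hderiv : ∀ p, HasDerivAt (fun p => Real.arctan (c * p)) (c / (1 + (c * p) ^ 2)) p :=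
    fun p => ((Real.hasDerivAt_arctan (c * p)).comp p ((hasDerivAt_id p).const_mul c)).congr_deriv
      (by ring)
  have hint : Integrable fun p => c / (1 + (c * p) ^ 2) := by
    simpa only [div_eq_mul_inv] using
      (integrable_inv_one_add_sq.comp_mul_left' hc.ne').const_mul c
  rw [integral_deriv_mul_cexp_I_mul hk hderiv hint
    ((tendsto_arctan_atBot.mono_right nhdsWithin_le_nhds).comp (tendsto_id.const_mul_atBot hc))
    ((tendsto_arctan_atTop.mono_right nhdsWithin_le_nhds).comp (tendsto_id.const_mul_atTop hc))]
  push_cast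
  rw [show I * k * (π / 2) = (k * π / 2) * I by ring,
    show I * k * (-(π / 2)) = -(k * π / 2) * I by ring, exp_mul_I, exp_mul_I,
    Complex.cos_neg, Complex.sin_neg]
  field_simp
  ring

theorem Real.sin_pi_mul_div_eq_zero_iff {d L : ℝ} (hd : d ≠ 0) (hL : L ≠ 0) :
    Real.sin (π * d / L) = 0 ↔ ∃ n : ℤ, n ≠ 0 ∧ d = n * L := by
  rw [Real.sin_eq_zero_iff]
  constructor
  · rintro ⟨n, hn⟩
    have hd' : d = n * L := by
      field_simp at hn
      exact hn.symm
    exact ⟨n, fun h0 => hd (by simpa [h0] using hd'), hd'⟩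
  · rintro ⟨n, -, rfl⟩
    exact ⟨n, by field_simp⟩

theorem sq_sqrt_mul_rpow_one_div_four {a b : ℝ} (ha : 0 ≤ a) (hb : 0 ≤ b) :
    (√a * b ^ ((1 : ℝ) / 4)) ^ 2 = a * √b := by
  rw [mul_pow, sq_sqrt ha, ← rpow_natCast, ← rpow_mul hb, sqrt_eq_rpow]
  norm_num

noncomputable def positionEigenfunction (hbar m β x p : ℝ) : ℂ :=
  ((√(m / π) * β ^ ((1 : ℝ) / 4) : ℝ) : ℂ) *
    cexp (-I * x * m * Real.arctan (p * √β / m) / (hbar * √β)) / (√(m ^ 2 + β * p ^ 2) : ℂ)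

section PositionEigenfunction

variable {hbar m β : ℝ}

theorem conj_positionEigenfunction_mul (hm : 0 < m) (hβ : 0 < β) (x x' p : ℝ) :
    starRingEnd ℂ (positionEigenfunction hbar m β x p) * positionEigenfunction hbar m β x' p =
      (π : ℂ)⁻¹ * (((√β / m / (1 + (√β / m * p) ^ 2)) : ℝ) *
        cexp (I * (m * (x - x') / (hbar * √β) : ℝ) * Real.arctan (√β / m * p))) := by
  have hamp : (√(m / π) * β ^ ((1 : ℝ) / 4)) ^ 2 / √(m ^ 2 + β * p ^ 2) ^ 2 =
      π⁻¹ * (√β / m / (1 + (√β / m * p) ^ 2)) := by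
    rw [sq_sqrt_mul_rpow_one_div_four (by positivity) hβ.le, sq_sqrt (by positivity), mul_pow,
      div_pow, sq_sqrt hβ.le]
    field_simp
  have hphase (t : ℝ) : starRingEnd ℂ (cexp (-I * x * m * t / (hbar * √β))) *
      cexp (-I * x' * m * t / (hbar * √β)) = cexp (I * (m * (x - x') / (hbar * √β) : ℝ) * t) := by
    rw [← exp_conj, ← Complex.exp_add]
    congr 1
    simp only [map_div₀, map_mul, map_neg, conj_I, conj_ofReal]
    push_cast
    ring
  rw [← hphase, ← mul_assoc, ← ofReal_inv, ← ofReal_mul, ← hamp,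
    show √β / m * p = p * √β / m by ring]
  simp only [positionEigenfunction, map_div₀, map_mul, conj_ofReal]
  push_cast
  ring

theorem integral_conj_positionEigenfunction_mul (hhbar : hbar ≠ 0) (hm : 0 < m) (hβ : 0 < β)
    {x x' : ℝ} (hxx' : x ≠ x') :
    ∫ p, starRingEnd ℂ (positionEigenfunction hbar m β x p) * positionEigenfunction hbar m β x' p =
      (((2 * hbar * √β / (m * π * (x' - x))) *
        Real.sin (m * π * (x' - x) / (2 * hbar * √β)) : ℝ) : ℂ) := by
  have hsβ : 0 < √β := sqrt_pos.mpr hβ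
  have hk : m * (x - x') / (hbar * √β) ≠ 0 :=
    div_ne_zero (mul_ne_zero hm.ne' (sub_ne_zero.mpr hxx')) (mul_ne_zero hhbar hsβ.ne')
  simp_rw [conj_positionEigenfunction_mul hm hβ, integral_const_mul,
    integral_deriv_arctan_mul_cexp_I_mul (div_pos hsβ hm) hk]
  rw [← ofReal_inv, ← ofReal_mul, ofReal_inj,
    show m * (x - x') / (hbar * √β) * π / 2 = -(m * π * (x' - x) / (2 * hbar * √β)) by ring,
    Real.sin_neg]
  field_simp
  ring

end PositionEigenfunction

/-- overlap of position eigenfunctions for positive β: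
`∫ ψ_x* ψ_{x'} = (2 hbar √β/(mπ(x'−x))) sin(mπ(x'−x)/(2 hbar √β))` for `x ≠ x'`,
and this vanishes iff `x' − x` is a nonzero integer multiple of `2 hbar √β/m`. -/
theorem eigenfunction_overlap
    (hbar m β : ℝ) (hhbar : 0 < hbar) (hm : 0 < m) (hβ : 0 < β)
    (ψ : ℝ → ℝ → ℂ)
    (hψ : ∀ x p : ℝ, ψ x p =
      ((Real.sqrt (m / Real.pi) * β ^ ((1 : ℝ) / 4) : ℝ) : ℂ) *
        Complex.exp (-Complex.I * x * m *
          (Real.arctan (p * Real.sqrt β / m)) / (hbar * Real.sqrt β)) /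
        (Real.sqrt (m ^ 2 + β * p ^ 2) : ℂ)) :
    ∀ x x' : ℝ, x ≠ x' →
      ((∫ p : ℝ, (starRingEnd ℂ) (ψ x p) * ψ x' p) =
        (((2 * hbar * Real.sqrt β / (m * Real.pi * (x' - x))) *
          Real.sin (m * Real.pi * (x' - x) / (2 * hbar * Real.sqrt β)) : ℝ) : ℂ)) ∧
      ((∫ p : ℝ, (starRingEnd ℂ) (ψ x p) * ψ x' p) = 0 ↔
        ∃ n : ℤ, n ≠ 0 ∧ x' - x = n * (2 * hbar * Real.sqrt β / m)) := by
  intro x x' hxx'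
  obtain rfl : ψ = positionEigenfunction hbar m β := funext fun x => funext (hψ x)
  have hoverlap := integral_conj_positionEigenfunction_mul hhbar.ne' hm hβ hxx'
  refine ⟨hoverlap, ?_⟩
  have hd : x' - x ≠ 0 := sub_ne_zero.mpr hxx'.symm
  rw [hoverlap, ofReal_eq_zero, mul_eq_zero,
    or_iff_right (div_ne_zero (by positivity) (mul_ne_zero (by positivity) hd)),
    show m * π * (x' - x) / (2 * hbar * √β) = π * (x' - x) / (2 * hbar * √β / m) by
      rw [div_div_eq_mul_div]; ring,
    Real.sin_pi_mul_div_eq_zero_iff hd (by positivity)]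
end

section
/- For negative β (β = −|β|), the function ψ_x(p) = B · exp(−i x m artanh(p√|β|/m)/(ħ√|β|)) / √(m² − |β|p²) on the interval (−m/√|β|, m/√|β|) is not square-integrable: ∫ |ψ_x(p)|² dp = ∞ for any B ≠ 0. -/
open Real Complex MeasureTheory

noncomputable def artanh (x : ℝ) : ℝ := (1 / 2) * Real.log ((1 + x) / (1 - x))

/-!
The phase factor of `ψ` has modulus one, so `|ψ p|² = |B|² / (m² - b p²)`. Writing `s = √b`,
`m² - b p² = (m - s p)(m + s p) ≤ 2 m s (m / s - p)`, so near the right endpoint `m / s` of the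
interval `|ψ|²` dominates a positive multiple of `(m / s - p)⁻¹`, whose integral diverges
logarithmically.
-/

open Set Asymptotics Topology

theorem lintegral_Ioo_ofReal_mul_inv_sub_eq_top {a c k : ℝ} (hac : a < c) (hk : 0 < k) :
    ∫⁻ x in Ioo a c, ENNReal.ofReal (k * (c - x)⁻¹) = ⊤ := by
  by_contra h
  have hnonneg : 0 ≤ᵐ[volume.restrict (Ioo a c)] fun x => k * (c - x)⁻¹ := by
    filter_upwards [ae_restrict_mem measurableSet_Ioo] with x hx
    exact mul_nonneg hk.le (inv_nonneg.2 (sub_nonneg.2 hx.2.le))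
  have hmeas : AEStronglyMeasurable (fun x => k * (c - x)⁻¹) (volume.restrict (Ioo a c)) := by
    fun_prop
  have hintegrable : IntervalIntegrable (fun x => k * (c - x)⁻¹) volume a c :=
    (intervalIntegrable_iff_integrableOn_Ioo_of_le hac.le).2
      ((lintegral_ofReal_ne_top_iff_integrable hmeas hnonneg).1 h)
  have hpole : (fun x => (x - c)⁻¹) =O[𝓝[≠] c] fun x => k * (c - x)⁻¹ := by
    refine ((isBigO_refl _ _).const_mul_left (-k⁻¹)).congr_left fun x => ?_
    rw [← mul_assoc, neg_mul, inv_mul_cancel₀ hk.ne', neg_one_mul, ← inv_neg, neg_sub]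
  exact not_intervalIntegrable_of_sub_inv_isBigO_punctured hpole hac.ne right_mem_uIcc hintegrable

theorem abs_mul_lt_of_mem_Ioo {m s p : ℝ} (hs : 0 < s) (hp : p ∈ Ioo (-(m / s)) (m / s)) :
    |s * p| < m := by
  rw [abs_mul, abs_of_pos hs, ← lt_div_iff₀' hs]
  exact abs_lt.2 hp

theorem inv_mul_inv_sub_le_inv_sq_sub_sq {m s p : ℝ} (hm : 0 < m) (hs : 0 < s)
    (hp : p ∈ Ioo (-(m / s)) (m / s)) :
    (2 * m * s)⁻¹ * (m / s - p)⁻¹ ≤ (m ^ 2 - s ^ 2 * p ^ 2)⁻¹ := by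
  obtain ⟨hgt, hlt⟩ := abs_lt.1 (abs_mul_lt_of_mem_Ioo hs hp)
  have hfactor : (2 * m * s) * (m / s - p) = 2 * m * (m - s * p) := by field_simp
  rw [← mul_inv, hfactor]
  apply inv_anti₀ (by nlinarith)
  nlinarith

theorem eigenfunction_not_square_integrable_negative_beta_general
    (hbar m b x : ℝ) (hm : 0 < m) (hb : 0 < b)
    (B : ℂ) (hB : B ≠ 0)
    (ψ : ℝ → ℂ)
    (hψ : ∀ p : ℝ, ψ p =
      B * Complex.exp (-Complex.I * x * m *
          (_root_.artanh (p * Real.sqrt b / m)) / (hbar * Real.sqrt b)) /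
        (Real.sqrt (m ^ 2 - b * p ^ 2) : ℂ)) :
    ∫⁻ p in Set.Ioo (-(m / Real.sqrt b)) (m / Real.sqrt b),
      (‖ψ p‖₊ : ENNReal) ^ 2 = ⊤ := by
  set s := Real.sqrt b
  have hs : 0 < s := Real.sqrt_pos.2 hb
  have hs2 : s ^ 2 = b := Real.sq_sqrt hb.le
  have hnorm : ∀ p, ‖ψ p‖ = ‖B‖ / Real.sqrt (m ^ 2 - b * p ^ 2) := by
    intro p
    simp [hψ, Complex.norm_exp, Complex.div_re, abs_of_nonneg (Real.sqrt_nonneg _), s]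
  have hbound : ∀ p ∈ Ioo (-(m / s)) (m / s),
      ENNReal.ofReal (‖B‖ ^ 2 * (2 * m * s)⁻¹ * (m / s - p)⁻¹) ≤ (‖ψ p‖₊ : ENNReal) ^ 2 := by
    intro p hp
    have hpos : 0 < m ^ 2 - b * p ^ 2 := by
      obtain ⟨hgt, hlt⟩ := abs_lt.1 (abs_mul_lt_of_mem_Ioo hs hp)
      rw [← hs2]
      nlinarith
    rw [← enorm_eq_nnnorm, ← ofReal_norm, ← ENNReal.ofReal_pow (norm_nonneg _), hnorm, div_pow,
      Real.sq_sqrt hpos.le, mul_assoc, div_eq_mul_inv, ← hs2]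
    exact ENNReal.ofReal_le_ofReal
      (mul_le_mul_of_nonneg_left (inv_mul_inv_sub_le_inv_sq_sub_sq hm hs hp) (by positivity))
  rw [eq_top_iff, ← lintegral_Ioo_ofReal_mul_inv_sub_eq_top (neg_lt_self (div_pos hm hs))
    (by positivity : 0 < ‖B‖ ^ 2 * (2 * m * s)⁻¹)]
  exact setLIntegral_mono' measurableSet_Ioo hbound

/-- for negative β (with `b = |β| > 0`), the position eigenfunction
`ψ_x(p) = B exp(−i x m artanh(p√b/m)/(hbar√b)) / √(m² − b p²)` on
`I = (−m/√b, m/√b)` is not square integrable: `∫_I |ψ_x|² dp = ∞` for `B ≠ 0`. -/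
theorem eigenfunction_not_square_integrable_negative_beta
    (hbar m b x : ℝ) (hhbar : 0 < hbar) (hm : 0 < m) (hb : 0 < b)
    (B : ℂ) (hB : B ≠ 0)
    (ψ : ℝ → ℂ)
    (hψ : ∀ p : ℝ, ψ p =
      B * Complex.exp (-Complex.I * x * m *
          (_root_.artanh (p * Real.sqrt b / m)) / (hbar * Real.sqrt b)) /
        (Real.sqrt (m ^ 2 - b * p ^ 2) : ℂ)) :
    ∫⁻ p in Set.Ioo (-(m / Real.sqrt b)) (m / Real.sqrt b),
      (‖ψ p‖₊ : ENNReal) ^ 2 = ⊤ :=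
  eigenfunction_not_square_integrable_negative_beta_general hbar m b x hm hb B hB ψ hψ
end

section
/- For a = m/√|β| > 0 and the map T defined by (Tψ)(p) = iħ[(1 − (|β|/m²)p²)ψ'(p) − (|β|/m²)p ψ(p)] on absolutely continuous ψ on I = (−a, a), the ODE Tφ = ∓iφ has general solution φ_±(p) = B_± exp(∓ m artanh(p√|β|/m)/(ħ√|β|)) / √(m² − |β|p²), and no nonzero such solution is square-integrable on I. -/
/-!
Dividing the equation by `iħ` turns it into the linear equation
`(m² − b p²) φ' = (b p − ε m²/ħ) φ`, and the profile
`exp(−κ artanh(p√b/m)) / √(m² − b p²)` with `κ = ε m/(ħ√b)` is a positive solution of it, so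
every solution is a constant multiple of that profile. For square integrability, the factor
`1/(m² − b p²)` of the squared profile has a non-integrable singularity `1/|p ∓ m/√b|` at both
endpoints, and the exponential factor is at least `1` on the half of the interval where
`κ artanh(p√b/m) ≤ 0`, which always reaches one of the endpoints.
-/

open Real Complex MeasureTheory

open Set

theorem exists_eq_const_mul_of_hasDerivAt_eq_mul {𝕜 : Type*} [RCLike 𝕜] {s : Set ℝ}
    (hs : IsOpen s) (hs' : IsPreconnected s) {f g a : ℝ → 𝕜}
    (hf : ∀ x ∈ s, HasDerivAt f (a x * f x) x) (hg : ∀ x ∈ s, HasDerivAt g (a x * g x) x)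
    (hg₀ : ∀ x ∈ s, g x ≠ 0) : ∃ B, ∀ x ∈ s, f x = B * g x := by
  have hquot : ∀ x ∈ s, HasDerivAt (f / g) 0 x := fun x hx => by
    convert (hf x hx).div (hg x hx) (hg₀ x hx) using 1
    rw [show a x * f x * g x - f x * (a x * g x) = 0 by ring, zero_div]
  obtain ⟨B, hB⟩ := hs.exists_is_const_of_deriv_eq_zero hs'
    (fun x hx => (hquot x hx).differentiableAt.differentiableWithinAt)
    (fun x hx => (hquot x hx).deriv)
  exact ⟨B, fun x hx => by rw [← hB x hx, Pi.div_apply, div_mul_cancel₀ _ (hg₀ x hx)]⟩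

theorem hasDerivAt_artanh {x : ℝ} (hx : x ∈ Ioo (-1 : ℝ) 1) :
    HasDerivAt _root_.artanh (1 - x ^ 2)⁻¹ x := by
  have h₁ : 1 + x ≠ 0 := by linarith [hx.1]
  have h₂ : 1 - x ≠ 0 := by linarith [hx.2]
  have hquot : HasDerivAt (fun y => (1 + y) / (1 - y)) (2 / (1 - x) ^ 2) x :=
    (((hasDerivAt_id' x).const_add 1).div ((hasDerivAt_id' x).const_sub 1) h₂).congr_deriv
      (by ring)
  refine ((hquot.log (div_ne_zero h₁ h₂)).const_mul (1 / 2)).congr_deriv ?_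
  rw [show 1 - x ^ 2 = (1 - x) * (1 + x) by ring]
  field_simp

theorem artanh_eq_real_artanh {x : ℝ} (hx : x ∈ Icc (-1 : ℝ) 1) :
    _root_.artanh x = Real.artanh x :=
  (Real.artanh_eq_half_log hx).symm

theorem not_integrableOn_Ioo_of_mul_inv_abs_sub_le {f : ℝ → ℝ} {c d e C : ℝ} (hcd : c < d)
    (he : e ∈ Icc c d) (hC : 0 < C) (hle : ∀ x ∈ Ioo c d, C * |x - e|⁻¹ ≤ f x) :
    ¬ IntegrableOn f (Ioo c d) := by
  intro hf
  have hinv : IntegrableOn (fun x => (x - e)⁻¹) (Ioo c d) := by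
    refine (hf.const_mul C⁻¹).mono' (by fun_prop) ?_
    refine ae_restrict_of_forall_mem measurableSet_Ioo fun x hx => ?_
    rw [norm_inv, Real.norm_eq_abs, le_inv_mul_iff₀ hC]
    exact hle x hx
  rw [← intervalIntegrable_iff_integrableOn_Ioo_of_le hcd.le, intervalIntegrable_sub_inv_iff,
    uIcc_of_le hcd.le] at hinv
  exact hinv.elim hcd.ne (· he)

section Profile

variable {m b : ℝ}

noncomputable def deficiencyProfile (m b κ p : ℝ) : ℝ :=
  Real.exp (-(κ * _root_.artanh (p * √b / m))) / √(m ^ 2 - b * p ^ 2)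

theorem mem_Ioo_div_sqrt_iff (hb : 0 < b) {p : ℝ} :
    p ∈ Ioo (-(m / √b)) (m / √b) ↔ p * √b ∈ Ioo (-m) m := by
  have hs : 0 < √b := sqrt_pos.2 hb
  rw [mem_Ioo, mem_Ioo, ← neg_div, div_lt_iff₀ hs, lt_div_iff₀ hs]

theorem mul_sqrt_div_mem_Ioo (hm : 0 < m) (hb : 0 < b) {p : ℝ}
    (hp : p ∈ Ioo (-(m / √b)) (m / √b)) : p * √b / m ∈ Ioo (-1 : ℝ) 1 := by
  obtain ⟨h₁, h₂⟩ := (mem_Ioo_div_sqrt_iff hb).1 hp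
  constructor
  · rw [lt_div_iff₀ hm]; linarith
  · rw [div_lt_iff₀ hm]; linarith

theorem sq_sub_mul_sq_pos (hb : 0 < b) {p : ℝ} (hp : p ∈ Ioo (-(m / √b)) (m / √b)) :
    0 < m ^ 2 - b * p ^ 2 := by
  obtain ⟨h₁, h₂⟩ := (mem_Ioo_div_sqrt_iff hb).1 hp
  have hsq : b * p ^ 2 = (p * √b) ^ 2 := by rw [mul_pow, sq_sqrt hb.le, mul_comm]
  nlinarith

theorem hasDerivAt_deficiencyProfile (hm : 0 < m) (hb : 0 < b) (κ : ℝ) {p : ℝ}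
    (hp : p ∈ Ioo (-(m / √b)) (m / √b)) :
    HasDerivAt (deficiencyProfile m b κ)
      ((b * p - κ * m * √b) / (m ^ 2 - b * p ^ 2) * deficiencyProfile m b κ p) p := by
  have hQ := sq_sub_mul_sq_pos hb hp
  have hlin : HasDerivAt (fun q => q * √b / m) (√b / m) p := by
    simpa using ((hasDerivAt_id' p).mul_const √b).div_const m
  have hA := (hasDerivAt_artanh (mul_sqrt_div_mem_Ioo hm hb hp)).comp p hlin
  have hR := (((hasDerivAt_pow 2 p).const_mul b).const_sub (m ^ 2)).sqrt hQ.ne'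
  refine (((hA.const_mul κ).neg.exp).div hR (sqrt_pos.2 hQ).ne').congr_deriv ?_
  have hsb : √b ^ 2 = b := sq_sqrt hb.le
  have hsQ : √(m ^ 2 - b * p ^ 2) ^ 2 = m ^ 2 - b * p ^ 2 := sq_sqrt hQ.le
  have hx : 1 - (p * √b / m) ^ 2 = (m ^ 2 - b * p ^ 2) / m ^ 2 := by
    field_simp; rw [hsb]
  simp only [Pi.neg_apply, Function.comp_apply, Nat.cast_ofNat, deficiencyProfile, hx]
  set E := Real.exp (-(κ * _root_.artanh (p * √b / m)))
  field_simp
  rw [hsQ]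
  ring

theorem deficiencyProfile_pos (hb : 0 < b) (κ : ℝ) {p : ℝ} (hp : p ∈ Ioo (-(m / √b)) (m / √b)) :
    0 < deficiencyProfile m b κ p :=
  div_pos (exp_pos _) (sqrt_pos.2 (sq_sub_mul_sq_pos hb hp))

theorem eq_mul_of_deficiency_equation {hbar ε p : ℝ} (hhbar : hbar ≠ 0) (hm : m ≠ 0)
    (hQ : 0 < m ^ 2 - b * p ^ 2) {z z' : ℂ}
    (h : I * hbar * ((1 - (b / m ^ 2) * p ^ 2) * z' - (b / m ^ 2) * p * z) = -(ε : ℂ) * I * z) :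
    z' = (((b * p - ε * m ^ 2 / hbar) / (m ^ 2 - b * p ^ 2) : ℝ) : ℂ) * z := by
  have hQ' : ((m ^ 2 - b * p ^ 2 : ℝ) : ℂ) ≠ 0 := ofReal_ne_zero.2 hQ.ne'
  have hh : (hbar : ℂ) ≠ 0 := ofReal_ne_zero.2 hhbar
  have hm' : (m : ℂ) ≠ 0 := ofReal_ne_zero.2 hm
  have h' : (hbar : ℂ) * ((1 - b / m ^ 2 * p ^ 2) * z' - b / m ^ 2 * p * z) = -ε * z :=
    mul_left_cancel₀ I_ne_zero (by linear_combination h)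
  push_cast at hQ' ⊢
  field_simp at h' ⊢
  linear_combination h'

theorem exists_eq_mul_deficiencyProfile {hbar ε : ℝ} (hhbar : hbar ≠ 0) (hm : 0 < m)
    (hb : 0 < b) {φ φ' : ℝ → ℂ}
    (hderiv : ∀ p ∈ Ioo (-(m / √b)) (m / √b), HasDerivAt φ (φ' p) p)
    (hODE : ∀ p ∈ Ioo (-(m / √b)) (m / √b),
      I * hbar * ((1 - (b / m ^ 2) * p ^ 2) * φ' p - (b / m ^ 2) * p * φ p)
        = -(ε : ℂ) * I * φ p) :
    ∃ B : ℂ, ∀ p ∈ Ioo (-(m / √b)) (m / √b),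
      φ p = B * deficiencyProfile m b (ε * m / (hbar * √b)) p := by
  have hκ : ε * m / (hbar * √b) * m * √b = ε * m ^ 2 / hbar := by
    have : √b ≠ 0 := (sqrt_pos.2 hb).ne'
    field_simp
  set κ := ε * m / (hbar * √b)
  refine exists_eq_const_mul_of_hasDerivAt_eq_mul isOpen_Ioo isPreconnected_Ioo
    (a := fun p => (((b * p - ε * m ^ 2 / hbar) / (m ^ 2 - b * p ^ 2) : ℝ) : ℂ))
    (fun p hp => ?_) (fun p hp => ?_)
    (fun p hp => ofReal_ne_zero.2 (deficiencyProfile_pos hb κ hp).ne')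
  · rw [← eq_mul_of_deficiency_equation hhbar hm.ne' (sq_sub_mul_sq_pos hb hp) (hODE p hp)]
    exact hderiv p hp
  · simpa [hκ] using (hasDerivAt_deficiencyProfile hm hb κ hp).ofReal_comp

theorem cexp_div_sqrt_eq_deficiencyProfile (hbar ε p : ℝ) :
    Complex.exp (-(ε : ℂ) * m * (_root_.artanh (p * √b / m)) / (hbar * √b)) /
        (√(m ^ 2 - b * p ^ 2) : ℂ)
      = deficiencyProfile m b (ε * m / (hbar * √b)) p := by
  rw [deficiencyProfile, ofReal_div, ofReal_exp]
  push_cast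
  ring_nf

theorem inv_sq_sub_mul_sq_le_deficiencyProfile_sq (hb : 0 < b) {κ p : ℝ}
    (hp : p ∈ Ioo (-(m / √b)) (m / √b)) (hκ : κ * _root_.artanh (p * √b / m) ≤ 0) :
    (m ^ 2 - b * p ^ 2)⁻¹ ≤ deficiencyProfile m b κ p ^ 2 := by
  have hQ := sq_sub_mul_sq_pos hb hp
  rw [deficiencyProfile, div_pow, sq_sqrt hQ.le, inv_eq_one_div]
  gcongr
  exact one_le_pow₀ (one_le_exp (neg_nonneg.2 hκ))

theorem mul_inv_abs_sub_le_inv_sq_sub_mul_sq (hb : 0 < b) {p e : ℝ}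
    (hp : p ∈ Ioo (-(m / √b)) (m / √b)) (he : e = -(m / √b) ∨ e = m / √b) :
    (2 * m * √b)⁻¹ * |p - e|⁻¹ ≤ (m ^ 2 - b * p ^ 2)⁻¹ := by
  obtain ⟨h₁, h₂⟩ := (mem_Ioo_div_sqrt_iff hb).1 hp
  have hsq : b * p ^ 2 = (p * √b) ^ 2 := by rw [mul_pow, sq_sqrt hb.le, mul_comm]
  have key : m ^ 2 - b * p ^ 2 ≤ 2 * m * √b * |p - e| := by
    rcases he with rfl | rfl
    · have h : √b * |p - -(m / √b)| = p * √b + m := by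
        rw [abs_of_pos (by linarith [hp.1])]; field_simp; ring
      rw [mul_assoc, h]
      nlinarith [sq_nonneg (p * √b + m)]
    · have h : √b * |p - m / √b| = m - p * √b := by
        rw [abs_of_neg (by linarith [hp.2])]; field_simp; ring
      rw [mul_assoc, h]
      nlinarith [sq_nonneg (p * √b - m)]
  rw [← mul_inv]
  exact inv_anti₀ (sq_sub_mul_sq_pos hb hp) key

theorem not_integrableOn_deficiencyProfile_sq (hm : 0 < m) (hb : 0 < b) (κ : ℝ) :
    ¬ IntegrableOn (fun p => deficiencyProfile m b κ p ^ 2) (Ioo (-(m / √b)) (m / √b)) := by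
  have ha : 0 < m / √b := div_pos hm (sqrt_pos.2 hb)
  have hC : 0 < (2 * m * √b)⁻¹ := by positivity
  have hbound : ∀ {p e : ℝ}, p ∈ Ioo (-(m / √b)) (m / √b) → (e = -(m / √b) ∨ e = m / √b) →
      κ * _root_.artanh (p * √b / m) ≤ 0 →
      (2 * m * √b)⁻¹ * |p - e|⁻¹ ≤ deficiencyProfile m b κ p ^ 2 := fun hp he hκ =>
    (mul_inv_abs_sub_le_inv_sq_sub_mul_sq hb hp he).trans
      (inv_sq_sub_mul_sq_le_deficiencyProfile_sq hb hp hκ)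
  have hartanh : ∀ {p : ℝ}, p ∈ Ioo (-(m / √b)) (m / √b) →
      _root_.artanh (p * √b / m) = Real.artanh (p * √b / m) := fun hp =>
    artanh_eq_real_artanh (Ioo_subset_Icc_self (mul_sqrt_div_mem_Ioo hm hb hp))
  intro hint
  rcases le_total 0 κ with hκ | hκ
  · refine not_integrableOn_Ioo_of_mul_inv_abs_sub_le (neg_lt_zero.2 ha)
      (left_mem_Icc.2 (neg_nonpos.2 ha.le)) hC (fun p hp => ?_)
      (hint.mono_set (Ioo_subset_Ioo_right ha.le))
    have hpI : p ∈ Ioo (-(m / √b)) (m / √b) := ⟨hp.1, hp.2.trans ha⟩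
    refine hbound hpI (Or.inl rfl) (mul_nonpos_of_nonneg_of_nonpos hκ ?_)
    rw [hartanh hpI]
    exact Real.artanh_nonpos (div_nonpos_of_nonpos_of_nonneg
      (mul_nonpos_of_nonpos_of_nonneg hp.2.le (sqrt_nonneg b)) hm.le)
  · refine not_integrableOn_Ioo_of_mul_inv_abs_sub_le ha (right_mem_Icc.2 ha.le) hC
      (fun p hp => ?_) (hint.mono_set (Ioo_subset_Ioo_left (neg_nonpos.2 ha.le)))
    have hpI : p ∈ Ioo (-(m / √b)) (m / √b) := ⟨(neg_neg_of_pos ha).trans hp.1, hp.2⟩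
    refine hbound hpI (Or.inr rfl) (mul_nonpos_of_nonpos_of_nonneg hκ ?_)
    rw [hartanh hpI]
    exact Real.artanh_nonneg (by have := hp.1; positivity)

end Profile

theorem deficiency_solutions_not_square_integrable_general
    (hbar m b : ℝ) (hhbar : 0 < hbar) (hm : 0 < m) (hb : 0 < b)
    (ε : ℝ)
    (φ φ' : ℝ → ℂ)
    (hderiv : ∀ p ∈ Set.Ioo (-(m / Real.sqrt b)) (m / Real.sqrt b),
      HasDerivAt φ (φ' p) p)
    (hODE : ∀ p ∈ Set.Ioo (-(m / Real.sqrt b)) (m / Real.sqrt b),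
      Complex.I * hbar * ((1 - (b / m ^ 2) * p ^ 2) * φ' p
          - (b / m ^ 2) * p * φ p)
        = -(ε : ℂ) * Complex.I * φ p) :
    (∃ B : ℂ, ∀ p ∈ Set.Ioo (-(m / Real.sqrt b)) (m / Real.sqrt b),
      φ p = B * Complex.exp
          (-(ε : ℂ) * m * (_root_.artanh (p * Real.sqrt b / m)) / (hbar * Real.sqrt b)) /
        (Real.sqrt (m ^ 2 - b * p ^ 2) : ℂ)) ∧
    ((∃ p ∈ Set.Ioo (-(m / Real.sqrt b)) (m / Real.sqrt b), φ p ≠ 0) →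
      ¬ IntegrableOn (fun p => ‖φ p‖ ^ 2)
        (Set.Ioo (-(m / Real.sqrt b)) (m / Real.sqrt b))) := by
  obtain ⟨B, hB⟩ := exists_eq_mul_deficiencyProfile hhbar.ne' hm hb hderiv hODE
  refine ⟨⟨B, fun p hp => ?_⟩, ?_⟩
  · rw [mul_div_assoc, cexp_div_sqrt_eq_deficiencyProfile, hB p hp]
  rintro ⟨p₀, hp₀, hφ₀⟩ hint
  have hB₀ : B ≠ 0 := by
    rintro rfl
    exact hφ₀ (by rw [hB p₀ hp₀, zero_mul])
  apply not_integrableOn_deficiencyProfile_sq hm hb (ε * m / (hbar * √b))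
  refine IntegrableOn.congr_fun (hint.const_mul (‖B‖ ^ 2)⁻¹) (fun p hp => ?_) measurableSet_Ioo
  rw [hB p hp, norm_mul, norm_real, Real.norm_eq_abs, mul_pow, sq_abs, ← mul_assoc,
    inv_mul_cancel₀ (by positivity), one_mul]

/-- for the formal position operator
`(Tψ)(p) = i·hbar[(1 − (b/m²)p²)ψ'(p) − (b/m²)p ψ(p)]` (with `b = |β| > 0`) on
`I = (−a, a)`, `a = m/√b`, the ODE `Tφ = ∓iφ` has general solution
`φ_±(p) = B_± exp(∓ m artanh(p√b/m)/(hbar√b)) / √(m² − b p²)`, and no nonzero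
such solution is square integrable on `I`. -/
theorem deficiency_solutions_not_square_integrable
    (hbar m b : ℝ) (hhbar : 0 < hbar) (hm : 0 < m) (hb : 0 < b)
    (ε : ℝ) (hε : ε = 1 ∨ ε = -1)
    (φ φ' : ℝ → ℂ)
    (hderiv : ∀ p ∈ Set.Ioo (-(m / Real.sqrt b)) (m / Real.sqrt b),
      HasDerivAt φ (φ' p) p)
    (hODE : ∀ p ∈ Set.Ioo (-(m / Real.sqrt b)) (m / Real.sqrt b),
      Complex.I * hbar * ((1 - (b / m ^ 2) * p ^ 2) * φ' p
          - (b / m ^ 2) * p * φ p)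
        = -(ε : ℂ) * Complex.I * φ p) :
    (∃ B : ℂ, ∀ p ∈ Set.Ioo (-(m / Real.sqrt b)) (m / Real.sqrt b),
      φ p = B * Complex.exp
          (-(ε : ℂ) * m * (_root_.artanh (p * Real.sqrt b / m)) / (hbar * Real.sqrt b)) /
        (Real.sqrt (m ^ 2 - b * p ^ 2) : ℂ)) ∧
    ((∃ p ∈ Set.Ioo (-(m / Real.sqrt b)) (m / Real.sqrt b), φ p ≠ 0) →
      ¬ IntegrableOn (fun p => ‖φ p‖ ^ 2)
        (Set.Ioo (-(m / Real.sqrt b)) (m / Real.sqrt b))) :=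
  deficiency_solutions_not_square_integrable_general hbar m b hhbar hm hb ε φ φ' hderiv hODE
end

section
/- Ramanujan's formula: for a > 0 and ξ ∈ ℝ, ∫_{−∞}^{∞} e^{−iξs} |Γ(a + is)|² ds = √π · Γ(a)Γ(a + 1/2) · (cosh(ξ/2))^{−2a} = (2π/2^{2a}) Γ(2a) (cosh(ξ/2))^{−2a}. -/
/-!
The function `x ↦ (1 + x)^(-2a)` has Mellin transform `Γ(s)Γ(2a - s)/Γ(2a)` on `0 < Re s < 2a`:
the substitution `x = t/(1 - t)` turns the Mellin integral into the Beta integral `B(s, 2a - s)`.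
On the line `Re s = a` this transform is `|Γ(a + iy)|²/Γ(2a)`, which is integrable because
`|Γ(a + iy)| ≤ Γ(a + 1)/|a + iy|`, so Mellin inversion at `x = e^ξ` expresses the integral as
`2π Γ(2a) e^{aξ} (1 + e^ξ)^(-2a) = 2π Γ(2a) (2 cosh(ξ/2))^(-2a)`. Legendre's duplication formula
gives the second form of the constant.
-/

open Real Complex MeasureTheory Set ComplexConjugate

namespace Complex

theorem norm_Gamma_le_Gamma_re {z : ℂ} (hz : 0 < z.re) : ‖Gamma z‖ ≤ Real.Gamma z.re := by
  rw [Gamma_eq_integral hz, Real.Gamma_eq_integral hz, GammaIntegral]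
  refine (norm_integral_le_integral_norm _).trans_eq <|
    setIntegral_congr_fun measurableSet_Ioi fun x hx => ?_
  rw [norm_mul, norm_real, Real.norm_of_nonneg (Real.exp_pos _).le,
    norm_cpow_eq_rpow_re_of_pos hx, sub_re, one_re]

theorem norm_Gamma_le_div_norm {z : ℂ} (hz : 0 < z.re) :
    ‖Gamma z‖ ≤ Real.Gamma (z.re + 1) / ‖z‖ := by
  have hz0 : z ≠ 0 := fun h => by simp [h] at hz
  rw [le_div_iff₀ (norm_pos_iff.2 hz0), ← norm_mul, mul_comm, ← Gamma_add_one z hz0]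
  simpa using norm_Gamma_le_Gamma_re (z := z + 1) (by simp; linarith)

theorem continuous_Gamma_add_mul_I {σ : ℝ} (hσ : 0 < σ) :
    Continuous fun y : ℝ => Gamma (σ + y * I) := by
  refine continuous_iff_continuousAt.2 fun y => ContinuousAt.comp ?_ (by fun_prop)
  refine (differentiableAt_Gamma _ fun m h => ?_).continuousAt
  have hre : σ = -m := by simpa using congrArg re h
  linarith [(m.cast_nonneg : (0 : ℝ) ≤ m)]

theorem integrable_norm_Gamma_add_mul_I_sq {σ : ℝ} (hσ : 0 < σ) :
    Integrable fun y : ℝ => ‖Gamma (σ + y * I)‖ ^ 2 := by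
  have hmaj : Integrable fun y : ℝ =>
      Real.Gamma (σ + 1) ^ 2 * ((σ ^ 2)⁻¹ * (1 + (y / σ) ^ 2)⁻¹) :=
    ((integrable_inv_one_add_sq.comp_div hσ.ne').const_mul _).const_mul _
  refine hmaj.mono' ((continuous_Gamma_add_mul_I hσ).norm.pow 2).aestronglyMeasurable
    (.of_forall fun y => ?_)
  have hbound := norm_Gamma_le_div_norm (z := σ + y * I) (by simpa using hσ)
  have hnorm : ‖(σ : ℂ) + y * I‖ ^ 2 = σ ^ 2 + y ^ 2 := by
    rw [Complex.sq_norm, normSq_add_mul_I]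
  simp only [add_re, ofReal_re, mul_re, I_re, mul_zero, ofReal_im, I_im, mul_one, sub_self,
    add_zero] at hbound
  rw [Real.norm_of_nonneg (by positivity)]
  calc ‖Gamma (σ + y * I)‖ ^ 2 ≤ (Real.Gamma (σ + 1) / ‖(σ : ℂ) + y * I‖) ^ 2 :=
        pow_le_pow_left₀ (norm_nonneg _) hbound 2
    _ = _ := by
        rw [div_pow, hnorm]
        field_simp

theorem verticalIntegrable_Gamma_mul_Gamma_sub {c σ : ℝ} (hσ : 0 < σ) (hσc : σ < c) :
    VerticalIntegrable (fun s => Gamma s * Gamma (c - s)) σ := by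
  -- `Γ(c - σ - iy)` is the conjugate of `Γ(c - σ + iy)`, and `2‖u‖‖v‖ ≤ ‖u‖² + ‖v‖²`.
  have hτ : 0 < c - σ := by linarith
  have hconj : ∀ y : ℝ, Gamma (c - (σ + y * I)) = conj (Gamma ((c - σ : ℝ) + y * I)) := by
    intro y
    rw [← Gamma_conj]
    congr 1
    apply Complex.ext <;> simp
  simp only [VerticalIntegrable, hconj]
  refine (((integrable_norm_Gamma_add_mul_I_sq hσ).add
    (integrable_norm_Gamma_add_mul_I_sq hτ)).div_const 2).mono'
    ((continuous_Gamma_add_mul_I hσ).mul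
      (continuous_conj.comp (continuous_Gamma_add_mul_I hτ))).aestronglyMeasurable
    (.of_forall fun y => ?_)
  rw [norm_mul, RCLike.norm_conj, Pi.add_apply]
  nlinarith [two_mul_le_add_sq ‖Gamma (σ + y * I)‖ ‖Gamma ((c - σ : ℝ) + y * I)‖]

end Complex

theorem image_div_one_sub_Ioo : (fun t : ℝ => t / (1 - t)) '' Ioo 0 1 = Ioi 0 := by
  ext x
  constructor
  · rintro ⟨t, ⟨ht0, ht1⟩, rfl⟩
    exact div_pos ht0 (by linarith)
  · intro hx
    rw [mem_Ioi] at hx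
    refine ⟨x / (1 + x), ⟨by positivity, (div_lt_one (by linarith)).2 (by linarith)⟩, ?_⟩
    field_simp
    ring

theorem injOn_div_one_sub : InjOn (fun t : ℝ => t / (1 - t)) (Ioo 0 1) := by
  intro t₁ ⟨_, h₁⟩ t₂ ⟨_, h₂⟩ h
  have : (1 : ℝ) - t₁ ≠ 0 := by linarith
  have : (1 : ℝ) - t₂ ≠ 0 := by linarith
  field_simp at h
  linarith

theorem hasDerivWithinAt_div_one_sub {t : ℝ} (ht : t ∈ Ioo (0 : ℝ) 1) :
    HasDerivWithinAt (fun t : ℝ => t / (1 - t)) ((1 - t) ^ 2)⁻¹ (Ioo 0 1) t := by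
  have h := (hasDerivAt_id t).div ((hasDerivAt_id t).const_sub 1) (sub_ne_zero.2 ht.2.ne')
  simp only [one_mul, id_eq] at h
  exact h.hasDerivWithinAt.congr_deriv (by ring)

theorem mellin_integrand_comp_div_one_sub {c : ℝ} {s : ℂ} {t : ℝ} (ht : t ∈ Ioo 0 1) :
    |((1 - t) ^ 2)⁻¹| •
        (((t / (1 - t) : ℝ) : ℂ) ^ (s - 1) • (((1 + t / (1 - t)) ^ (-c) : ℝ) : ℂ))
      = (t : ℂ) ^ (s - 1) * (1 - (t : ℂ)) ^ ((c : ℂ) - s - 1) := by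
  obtain ⟨ht0, ht1⟩ := ht
  have hw : (0 : ℝ) < 1 - t := by linarith
  have hw0 : ((1 - t : ℝ) : ℂ) ≠ 0 := by exact_mod_cast hw.ne'
  have hrpow : (1 + t / (1 - t)) ^ (-c) = (1 - t) ^ c := by
    rw [show 1 + t / (1 - t) = (1 - t)⁻¹ by field_simp; ring, Real.inv_rpow hw.le,
      ← Real.rpow_neg hw.le, neg_neg]
  have hdiv : ((t / (1 - t) : ℝ) : ℂ) ^ (s - 1)
      = (t : ℂ) ^ (s - 1) * ((1 - t : ℝ) : ℂ) ^ (-(s - 1)) := by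
    rw [div_eq_mul_inv, ofReal_mul, mul_cpow_ofReal_nonneg ht0.le (inv_nonneg.2 hw.le),
      ofReal_inv, inv_cpow _ _ (by rw [arg_ofReal_of_nonneg hw.le]; exact pi_ne_zero.symm),
      cpow_neg]
  rw [abs_of_pos (by positivity), hrpow, hdiv, ofReal_cpow hw.le, real_smul, smul_eq_mul,
    show (1 - (t : ℂ)) = ((1 - t : ℝ) : ℂ) by push_cast; ring,
    show (c : ℂ) - s - 1 = -2 + (-(s - 1) + c) by ring, cpow_add _ _ hw0, cpow_add _ _ hw0,
    cpow_neg, cpow_neg, cpow_ofNat]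
  push_cast
  ring

theorem mellinConvergent_one_add_rpow_neg {c : ℝ} {s : ℂ} (hs : 0 < s.re) (hsc : s.re < c) :
    MellinConvergent (fun x : ℝ => (((1 + x) ^ (-c) : ℝ) : ℂ)) s := by
  rw [MellinConvergent, ← image_div_one_sub_Ioo,
    integrableOn_image_iff_integrableOn_abs_deriv_smul measurableSet_Ioo
      (fun _ => hasDerivWithinAt_div_one_sub) injOn_div_one_sub]
  have hbeta := betaIntegral_convergent (u := s) (v := c - s) hs (by simpa using hsc)
  refine (((intervalIntegrable_iff_integrableOn_Ioc_of_le zero_le_one).1 hbeta).mono_set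
    Ioo_subset_Ioc_self).congr_fun (fun t ht => ?_) measurableSet_Ioo
  rw [mellin_integrand_comp_div_one_sub ht]

theorem mellin_one_add_rpow_neg {c : ℝ} {s : ℂ} (hs : 0 < s.re) (hsc : s.re < c) :
    mellin (fun x : ℝ => (((1 + x) ^ (-c) : ℝ) : ℂ)) s
      = Complex.Gamma s * Complex.Gamma (c - s) / Complex.Gamma c := by
  rw [eq_div_iff (Gamma_ne_zero_of_re_pos (by simpa using hs.trans hsc)),
    Gamma_mul_Gamma_eq_betaIntegral hs (by simpa using hsc), add_sub_cancel,
    mellin, ← image_div_one_sub_Ioo, integral_image_eq_integral_abs_deriv_smul measurableSet_Ioo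
    (fun _ => hasDerivWithinAt_div_one_sub) injOn_div_one_sub, betaIntegral,
    intervalIntegral.integral_of_le zero_le_one, integral_Ioc_eq_integral_Ioo, mul_comm,
    setIntegral_congr_fun measurableSet_Ioo fun t ht => mellin_integrand_comp_div_one_sub ht]

theorem integral_cpow_mul_Gamma_mul_Gamma_sub {c σ x : ℝ} (hσ : 0 < σ) (hσc : σ < c)
    (hx : 0 < x) :
    ∫ y : ℝ, (x : ℂ) ^ (-(σ + y * I)) *
        (Complex.Gamma (σ + y * I) * Complex.Gamma (c - (σ + y * I)))
      = 2 * π * Complex.Gamma c * (((1 + x) ^ (-c) : ℝ) : ℂ) := by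
  set f : ℝ → ℂ := fun x => (((1 + x) ^ (-c) : ℝ) : ℂ)
  have hmellin : ∀ y : ℝ, mellin f (σ + y * I)
      = Complex.Gamma (σ + y * I) * Complex.Gamma (c - (σ + y * I)) / Complex.Gamma c :=
    fun y => mellin_one_add_rpow_neg (by simpa using hσ) (by simpa using hσc)
  have hvert : VerticalIntegrable (mellin f) σ := by
    simpa only [VerticalIntegrable, hmellin] using
      (verticalIntegrable_Gamma_mul_Gamma_sub hσ hσc).div_const (Complex.Gamma c)
  have hcont : ContinuousAt f x :=
    continuous_ofReal.continuousAt.comp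
      ((Real.continuousAt_rpow_const _ _ (.inl (by positivity))).comp (by fun_prop))
  have hinv := mellinInv_mellin_eq σ f hx
    (mellinConvergent_one_add_rpow_neg (by simpa using hσ) (by simpa using hσc)) hvert hcont
  have hc : Complex.Gamma c ≠ 0 := Gamma_ne_zero_of_re_pos (by simpa using hσ.trans hσc)
  simp only [mellinInv, hmellin, smul_eq_mul, ← mul_div_assoc, integral_div] at hinv
  rw [show (((1 + x) ^ (-c) : ℝ) : ℂ) = f x from rfl, ← hinv, real_smul]
  generalize (∫ y : ℝ, _ : ℂ) = T
  push_cast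
  field_simp

theorem Real.exp_mul_mul_one_add_exp_rpow_neg (a ξ : ℝ) :
    Real.exp (a * ξ) * (1 + Real.exp ξ) ^ (-(2 * a)) = (2 * Real.cosh (ξ / 2)) ^ (-(2 * a)) := by
  have hsplit : 1 + Real.exp ξ = 2 * Real.cosh (ξ / 2) * Real.exp (ξ / 2) := by
    rw [Real.cosh_eq, mul_div_cancel₀ _ two_ne_zero, add_mul, ← Real.exp_add, ← Real.exp_add]
    ring_nf
    rw [Real.exp_zero, add_comm]
  rw [hsplit, Real.mul_rpow (by positivity) (Real.exp_pos _).le, ← Real.exp_mul, mul_left_comm,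
    ← Real.exp_add, show a * ξ + ξ / 2 * -(2 * a) = 0 by ring, Real.exp_zero, mul_one]

theorem Real.sqrt_pi_mul_Gamma_mul_Gamma_add_half (a : ℝ) :
    √π * Real.Gamma a * Real.Gamma (a + 1 / 2) = 2 * π / 2 ^ (2 * a) * Real.Gamma (2 * a) := by
  rw [mul_assoc, Real.Gamma_mul_Gamma_add_half, Real.rpow_sub two_pos, Real.rpow_one]
  calc √π * (Real.Gamma (2 * a) * (2 / 2 ^ (2 * a)) * √π)
      = (√π * √π) * 2 / 2 ^ (2 * a) * Real.Gamma (2 * a) := by ring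
    _ = _ := by rw [Real.mul_self_sqrt pi_nonneg]; ring

theorem Complex.ofReal_exp_cpow (ξ : ℝ) (w : ℂ) :
    ((Real.exp ξ : ℝ) : ℂ) ^ w = Complex.exp (ξ * w) := by
  rw [ofReal_exp, cpow_def_of_ne_zero (Complex.exp_ne_zero _),
    log_exp (by simpa using pi_pos) (by simpa using pi_nonneg)]

theorem integral_exp_mul_Gamma_add_mul_Gamma_sub {a : ℝ} (ξ : ℝ) (ha : 0 < a) :
    ∫ s : ℝ, Complex.exp (-I * ξ * s) * (Complex.Gamma (a + I * s) * Complex.Gamma (a - I * s))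
      = ((2 * π * Real.Gamma (2 * a) * (2 * Real.cosh (ξ / 2)) ^ (-(2 * a)) : ℝ) : ℂ) := by
  have hinv := integral_cpow_mul_Gamma_mul_Gamma_sub (c := 2 * a) (x := Real.exp ξ) ha
    (by linarith) (Real.exp_pos ξ)
  have hintegrand : ∀ y : ℝ, ((Real.exp ξ : ℝ) : ℂ) ^ (-(a + y * I)) *
      (Complex.Gamma (a + y * I) * Complex.Gamma ((2 * a : ℝ) - (a + y * I)))
      = Complex.exp (-(a * ξ)) * (Complex.exp (-I * ξ * y) *
        (Complex.Gamma (a + I * y) * Complex.Gamma (a - I * y))) := by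
    intro y
    rw [Complex.ofReal_exp_cpow, show (ξ : ℂ) * -(a + y * I) = -(a * ξ) + -I * ξ * y by ring,
      Complex.exp_add]
    push_cast
    ring_nf
  simp only [hintegrand, integral_const_mul] at hinv
  generalize (∫ s : ℝ, _ : ℂ) = T at hinv ⊢
  calc T = Complex.exp (a * ξ) * (Complex.exp (-(a * ξ)) * T) := by
        rw [← mul_assoc, ← Complex.exp_add, add_neg_cancel, Complex.exp_zero, one_mul]
    _ = ((2 * π * Real.Gamma (2 * a) *
          (Real.exp (a * ξ) * (1 + Real.exp ξ) ^ (-(2 * a))) : ℝ) : ℂ) := by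
        rw [hinv, Gamma_ofReal]
        push_cast
        ring
    _ = _ := by rw [Real.exp_mul_mul_one_add_exp_rpow_neg]

/-- Ramanujan's formula: for `a > 0` and `ξ ∈ ℝ`,
`∫ e^{−iξs} |Γ(a+is)|² ds = √π Γ(a)Γ(a+1/2) cosh(ξ/2)^{−2a}
  = (2π/2^{2a}) Γ(2a) cosh(ξ/2)^{−2a}`. -/
theorem ramanujan_gamma_formula (a ξ : ℝ) (ha : 0 < a) :
    (∫ s : ℝ, Complex.exp (-Complex.I * ξ * s) *
        (Complex.Gamma (a + Complex.I * s) * Complex.Gamma (a - Complex.I * s)))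
      = ((Real.sqrt Real.pi * Real.Gamma a * Real.Gamma (a + 1 / 2) *
          (Real.cosh (ξ / 2)) ^ (-(2 * a)) : ℝ) : ℂ) ∧
    (Real.sqrt Real.pi * Real.Gamma a * Real.Gamma (a + 1 / 2) *
        (Real.cosh (ξ / 2)) ^ (-(2 * a)) : ℝ)
      = (2 * Real.pi / 2 ^ (2 * a)) * Real.Gamma (2 * a) *
          (Real.cosh (ξ / 2)) ^ (-(2 * a)) := by
  have hdup := Real.sqrt_pi_mul_Gamma_mul_Gamma_add_half a
  refine ⟨?_, by rw [hdup]⟩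
  rw [integral_exp_mul_Gamma_add_mul_Gamma_sub ξ ha, hdup,
    Real.mul_rpow zero_le_two (Real.cosh_pos _).le, Real.rpow_neg zero_le_two]
  ring_nf
end

section
/- Second-moment identity for the |Γ|⁴ density: for a > 0 and b > 0, (bΓ(4a)/(2πΓ(2a)⁴)) ∫_{−∞}^{∞} s² |Γ(a + ibs)|⁴ ds = a²/(b²(1 + 4a)). -/
/-!
Let `G_A(x) = (2 cosh (x/2))^(-2A)`. The logistic substitution `u = σ(x)` turns the Fourier
integral `∫ e^{itx} G_A(x) dx` into the Beta integral `B(A + it, A - it)`, so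
`𝓕 G_A(ξ) = Γ(A + 2πiξ) Γ(A - 2πiξ) / Γ(2A)`. Up to the substitution `t = 2πξ` and the factor
`Γ(2A)²`, the second moment of `|Γ(A + it)|⁴` is therefore
`∫ (2πξ)² (𝓕 G_A)² = -∫ 𝓕(G_A'') 𝓕 G_A = -∫ G_A'' G_A`, by the multiplication formula and
Fourier inversion (`G_A` is even). Finally `G_A'' = A² G_A - 2A(2A+1) G_{A+1}` and
`G_A G_B = G_{A+B}`, so the last integral is a combination of the Beta values
`∫ G_B = Γ(B)² / Γ(2B)`.
-/

open Real Complex MeasureTheory Set FourierTransform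

namespace Real

variable {E : Type*} [NormedAddCommGroup E] [NormedSpace ℝ E]

lemma integrableOn_Ioo_iff_integrable_comp_sigmoid (f : ℝ → E) :
    IntegrableOn f (Ioo 0 1) ↔
      Integrable fun y ↦ (sigmoid y * (1 - sigmoid y)) • f (sigmoid y) := by
  rw [← range_sigmoid, ← image_univ, integrableOn_image_iff_integrableOn_abs_deriv_smul
    MeasurableSet.univ (fun y _ ↦ (hasDerivAt_sigmoid y).hasDerivWithinAt)
    sigmoid_injective.injOn, integrableOn_univ]
  simp only [abs_of_pos (mul_pos (sigmoid_pos _) (sub_pos.2 (sigmoid_lt_one _)))]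

lemma integral_Ioo_eq_integral_comp_sigmoid (f : ℝ → E) :
    ∫ x in Ioo 0 1, f x = ∫ y, (sigmoid y * (1 - sigmoid y)) • f (sigmoid y) := by
  rw [← range_sigmoid, ← image_univ, integral_image_eq_integral_abs_deriv_smul
    MeasurableSet.univ (fun y _ ↦ (hasDerivAt_sigmoid y).hasDerivWithinAt)
    sigmoid_injective.injOn, Measure.restrict_univ]
  simp only [abs_of_pos (mul_pos (sigmoid_pos _) (sub_pos.2 (sigmoid_lt_one _)))]

lemma log_sigmoid (y : ℝ) : log (sigmoid y) = y / 2 - log (2 * cosh (y / 2)) := by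
  have h : 1 + exp (-y) = exp (-(y / 2)) * (2 * cosh (y / 2)) := by
    rw [cosh_eq, mul_div_cancel₀ _ two_ne_zero, mul_add, ← exp_add, ← exp_add]
    ring_nf
    simp [add_comm]
  rw [sigmoid_def, log_inv, h, log_mul (exp_pos _).ne' (by positivity), log_exp]
  ring

lemma abs_sinh_le_cosh (y : ℝ) : |sinh y| ≤ cosh y := by
  rw [abs_sinh, ← cosh_abs]
  exact (sinh_lt_cosh _).le

end Real

namespace Complex

lemma cpow_sigmoid (y : ℝ) (z : ℂ) :
    (Real.sigmoid y : ℂ) ^ z =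
      exp (z * ((y / 2 - Real.log (2 * Real.cosh (y / 2)) : ℝ) : ℂ)) := by
  rw [cpow_def_of_ne_zero (ofReal_ne_zero.2 (Real.sigmoid_pos y).ne'),
    ← ofReal_log (Real.sigmoid_pos y).le, Real.log_sigmoid, mul_comm]

lemma sigmoid_smul_cpow_mul_cpow (y : ℝ) (z w : ℂ) :
    (Real.sigmoid y * (1 - Real.sigmoid y)) •
        ((Real.sigmoid y : ℂ) ^ (z - 1) * (1 - (Real.sigmoid y : ℂ)) ^ (w - 1)) =
      (Real.sigmoid y : ℂ) ^ z * (Real.sigmoid (-y) : ℂ) ^ w := by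
  have h₀ : (Real.sigmoid y : ℂ) ≠ 0 := ofReal_ne_zero.2 (Real.sigmoid_pos y).ne'
  have h₁ : (Real.sigmoid (-y) : ℂ) ≠ 0 := ofReal_ne_zero.2 (Real.sigmoid_pos (-y)).ne'
  rw [Real.sigmoid_neg, real_smul, cpow_sub _ _ h₀, cpow_one] at *
  push_cast at *
  rw [cpow_sub _ _ h₁, cpow_one]
  field_simp

lemma betaIntegral_eq_integral_sigmoid (z w : ℂ) :
    betaIntegral z w =
      ∫ y : ℝ, (Real.sigmoid y : ℂ) ^ z * (Real.sigmoid (-y) : ℂ) ^ w := by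
  rw [betaIntegral, intervalIntegral.integral_of_le zero_le_one, integral_Ioc_eq_integral_Ioo,
    Real.integral_Ioo_eq_integral_comp_sigmoid]
  simp only [sigmoid_smul_cpow_mul_cpow]

lemma integrable_cpow_sigmoid_mul_cpow_sigmoid_neg {z w : ℂ} (hz : 0 < z.re) (hw : 0 < w.re) :
    Integrable fun y : ℝ ↦ (Real.sigmoid y : ℂ) ^ z * (Real.sigmoid (-y) : ℂ) ^ w := by
  have h := (betaIntegral_convergent hz hw).1.mono_set Ioo_subset_Ioc_self
  rw [Real.integrableOn_Ioo_iff_integrable_comp_sigmoid] at h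
  simpa only [sigmoid_smul_cpow_mul_cpow] using h

end Complex

section Fourier

variable {V : Type*} [NormedAddCommGroup V] [InnerProductSpace ℝ V] [FiniteDimensional ℝ V]
  [MeasurableSpace V] [BorelSpace V]

lemma continuous_fourier_of_integrable {f : V → ℂ} (hf : Integrable f) : Continuous (𝓕 f) :=
  VectorFourier.fourierIntegral_continuous Real.continuous_fourierChar
    (by simpa using continuous_inner) hf

lemma norm_fourier_le_integral_norm (f : V → ℂ) (ξ : V) : ‖𝓕 f ξ‖ ≤ ∫ x, ‖f x‖ :=
  VectorFourier.norm_fourierIntegral_le_integral_norm _ _ _ f ξ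

lemma integral_fourier_mul_fourier {f g : V → ℂ} (hf : Integrable f) (hfc : Continuous f)
    (hFf : Integrable (𝓕 f)) (hg : Integrable g) :
    ∫ ξ, 𝓕 g ξ * 𝓕 f ξ = ∫ x, g x * f (-x) := by
  have h := VectorFourier.integral_fourierIntegral_smul_eq_flip (L := innerₗ V)
    Real.continuous_fourierChar (by simpa using continuous_inner) hg hFf
  rw [flip_innerₗ] at h
  refine h.trans (integral_congr_ae (Filter.Eventually.of_forall fun x ↦ ?_))
  change g x * 𝓕 (𝓕 f) x = g x * f (-x)
  rw [← neg_neg x, ← Real.fourierInv_eq_fourier_neg, hfc.fourierInv_fourier_eq hf hFf, neg_neg]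

lemma fourier_eq_of_hasDerivAt {f f' : ℝ → ℂ} (hf : Integrable f) (hf' : Integrable f')
    (hd : ∀ x, HasDerivAt f (f' x) x) (ξ : ℝ) : 𝓕 f' ξ = 2 * π * I * ξ * 𝓕 f ξ := by
  have hf'_eq : deriv f = f' := funext fun x ↦ (hd x).deriv
  rw [← hf'_eq, Real.fourier_deriv hf (fun x ↦ (hd x).differentiableAt) (hf'_eq ▸ hf')]
  rfl

-- Two integrable derivatives give `‖𝓕 f ξ‖ = O((1 + ξ²)⁻¹)`.
lemma integrable_fourier_of_hasDerivAt {f f' f'' : ℝ → ℂ} (hf : Integrable f)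
    (hf' : Integrable f') (hf'' : Integrable f'') (hd : ∀ x, HasDerivAt f (f' x) x)
    (hd' : ∀ x, HasDerivAt f' (f'' x) x) : Integrable (𝓕 f) := by
  set C := (∫ x, ‖f x‖) + (∫ x, ‖f'' x‖) / (4 * π ^ 2)
  have hbound (ξ : ℝ) : ‖𝓕 f ξ‖ ≤ C * (1 + ξ ^ 2)⁻¹ := by
    have h₀ := norm_fourier_le_integral_norm f ξ
    have h₂ := norm_fourier_le_integral_norm f'' ξ
    rw [fourier_eq_of_hasDerivAt hf' hf'' hd', fourier_eq_of_hasDerivAt hf hf' hd] at h₂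
    have hnorm : ‖2 * π * I * ξ * (2 * π * I * ξ * 𝓕 f ξ)‖ =
        4 * π ^ 2 * (ξ ^ 2 * ‖𝓕 f ξ‖) := by
      simp only [norm_mul, Complex.norm_ofNat, norm_real, Real.norm_eq_abs, abs_of_pos pi_pos,
        norm_I]
      rw [← sq_abs ξ]
      ring
    rw [hnorm, ← le_div_iff₀' (by positivity)] at h₂
    rw [← div_eq_mul_inv, le_div_iff₀ (by positivity)]
    linarith
  exact (integrable_inv_one_add_sq.const_mul C).mono'
    (continuous_fourier_of_integrable hf).aestronglyMeasurable (Filter.Eventually.of_forall hbound)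

end Fourier

noncomputable def coshKernel (A x : ℝ) : ℝ := (2 * Real.cosh (x / 2)) ^ (-(2 * A))

section

lemma coshKernel_pos (A x : ℝ) : 0 < coshKernel A x := by unfold coshKernel; positivity

lemma coshKernel_neg (A x : ℝ) : coshKernel A (-x) = coshKernel A x := by
  rw [coshKernel, coshKernel, neg_div, Real.cosh_neg]

@[fun_prop]
lemma continuous_coshKernel (A : ℝ) : Continuous (coshKernel A) :=
  (by fun_prop : Continuous fun x ↦ 2 * Real.cosh (x / 2)).rpow_const
    fun x ↦ Or.inl (by positivity)

lemma coshKernel_mul_coshKernel (A B x : ℝ) :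
    coshKernel A x * coshKernel B x = coshKernel (A + B) x := by
  rw [coshKernel, coshKernel, coshKernel, ← Real.rpow_add (by positivity)]
  ring_nf

lemma two_cosh_mul_coshKernel_add_half (A x : ℝ) :
    2 * Real.cosh (x / 2) * coshKernel (A + 1 / 2) x = coshKernel A x := by
  have hc : 2 * Real.cosh (x / 2) ≠ 0 := by positivity
  rw [coshKernel, coshKernel, show -(2 * (A + 1 / 2)) = -(2 * A) - 1 by ring,
    Real.rpow_sub_one hc, mul_div_cancel₀ _ hc]

lemma cpow_sigmoid_mul_cpow_sigmoid_neg (A t y : ℝ) :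
    (Real.sigmoid y : ℂ) ^ (A + I * t) * (Real.sigmoid (-y) : ℂ) ^ (A - I * t) =
      cexp (I * t * y) * coshKernel A y := by
  rw [Complex.cpow_sigmoid, Complex.cpow_sigmoid, neg_div, Real.cosh_neg, ← Complex.exp_add,
    coshKernel, Real.rpow_def_of_pos (by positivity), ofReal_exp, ← Complex.exp_add]
  congr 1
  push_cast
  ring

variable {A : ℝ}

lemma integrable_coshKernel (hA : 0 < A) : Integrable (coshKernel A) := by
  have h := Complex.integrable_cpow_sigmoid_mul_cpow_sigmoid_neg (z := A + I * (0 : ℝ))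
    (w := A - I * (0 : ℝ)) (by simpa using hA) (by simpa using hA)
  simp only [cpow_sigmoid_mul_cpow_sigmoid_neg] at h
  simpa using h.re

lemma integral_cexp_mul_coshKernel (hA : 0 < A) (t : ℝ) :
    ∫ y : ℝ, cexp (I * t * y) * coshKernel A y =
      Complex.Gamma (A + I * t) * Complex.Gamma (A - I * t) / Real.Gamma (2 * A) := by
  have hΓ : (Real.Gamma (2 * A) : ℂ) ≠ 0 :=
    ofReal_ne_zero.2 (Real.Gamma_pos_of_pos (by positivity)).ne'
  rw [Complex.Gamma_mul_Gamma_eq_betaIntegral (by simpa using hA) (by simpa using hA),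
    Complex.betaIntegral_eq_integral_sigmoid, show (A + I * t) + (A - I * t) = ((2 * A : ℝ) : ℂ) by
      push_cast; ring, Complex.Gamma_ofReal, mul_div_cancel_left₀ _ hΓ]
  simp only [cpow_sigmoid_mul_cpow_sigmoid_neg]

lemma integral_coshKernel (hA : 0 < A) :
    ∫ y : ℝ, coshKernel A y = Real.Gamma A ^ 2 / Real.Gamma (2 * A) := by
  have h := integral_cexp_mul_coshKernel hA 0
  simp only [ofReal_zero, mul_zero, zero_mul, Complex.exp_zero, one_mul, add_zero, sub_zero,
    Complex.Gamma_ofReal] at h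
  rw [sq]
  exact_mod_cast h

lemma fourier_coshKernel (hA : 0 < A) (ξ : ℝ) :
    𝓕 (fun x : ℝ ↦ (coshKernel A x : ℂ)) ξ =
      Complex.Gamma (A + I * ((2 * π * ξ : ℝ) : ℂ)) *
        Complex.Gamma (A - I * ((2 * π * ξ : ℝ) : ℂ)) / Real.Gamma (2 * A) := by
  calc _ = ∫ x : ℝ, cexp (I * ((-(2 * π * ξ) : ℝ) : ℂ) * x) * coshKernel A x := by
        rw [Real.fourier_real_eq_integral_exp_smul]
        congr 1 with x
        rw [smul_eq_mul]
        push_cast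
        ring_nf
    _ = _ := by
        rw [integral_cexp_mul_coshKernel hA, mul_comm (Complex.Gamma _)]
        push_cast
        ring_nf

lemma hasDerivAt_coshKernel (A x : ℝ) :
    HasDerivAt (coshKernel A) (-(2 * A) * Real.sinh (x / 2) * coshKernel (A + 1 / 2) x) x := by
  have hc : HasDerivAt (fun x ↦ 2 * Real.cosh (x / 2)) (Real.sinh (x / 2)) x :=
    (((hasDerivAt_id' x).div_const 2).cosh.const_mul 2).congr_deriv (by ring)
  refine (hc.rpow_const (p := -(2 * A)) (Or.inl (by positivity))).congr_deriv ?_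
  rw [coshKernel]
  ring_nf

lemma deriv_coshKernel (A : ℝ) :
    deriv (coshKernel A) = fun x ↦ -(2 * A) * Real.sinh (x / 2) * coshKernel (A + 1 / 2) x :=
  funext fun x ↦ (hasDerivAt_coshKernel A x).deriv

lemma hasDerivAt_deriv_coshKernel (A x : ℝ) :
    HasDerivAt (deriv (coshKernel A))
      (A ^ 2 * coshKernel A x - 2 * A * (2 * A + 1) * coshKernel (A + 1) x) x := by
  have hs : HasDerivAt (fun x ↦ Real.sinh (x / 2)) (Real.cosh (x / 2) / 2) x :=
    ((hasDerivAt_id' x).div_const 2).sinh.congr_deriv (by ring)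
  rw [deriv_coshKernel]
  refine ((hs.const_mul (-(2 * A))).mul (hasDerivAt_coshKernel (A + 1 / 2) x)).congr_deriv ?_
  have h₁ := two_cosh_mul_coshKernel_add_half A x
  have h₂ := two_cosh_mul_coshKernel_add_half (A + 1 / 2) x
  rw [show A + 1 / 2 + 1 / 2 = A + 1 by ring] at h₂ ⊢
  linear_combination A ^ 2 * h₁ + A * (2 * A + 1) * Real.cosh (x / 2) * h₂
    - 2 * A * (2 * A + 1) * coshKernel (A + 1) x * Real.cosh_sq_sub_sinh_sq (x / 2)

lemma deriv_deriv_coshKernel (A : ℝ) :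
    deriv (deriv (coshKernel A)) =
      fun x ↦ A ^ 2 * coshKernel A x - 2 * A * (2 * A + 1) * coshKernel (A + 1) x :=
  funext fun x ↦ (hasDerivAt_deriv_coshKernel A x).deriv

lemma integrable_deriv_coshKernel (hA : 0 < A) : Integrable (deriv (coshKernel A)) := by
  rw [deriv_coshKernel]
  refine ((integrable_coshKernel hA).const_mul A).mono'
    (by fun_prop : Continuous _).aestronglyMeasurable (Filter.Eventually.of_forall fun x ↦ ?_)
  rw [← two_cosh_mul_coshKernel_add_half A x, norm_mul, norm_mul, Real.norm_eq_abs,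
    Real.norm_eq_abs, Real.norm_eq_abs, abs_neg, abs_of_pos (by positivity : 0 < 2 * A),
    abs_of_pos (coshKernel_pos _ _)]
  calc 2 * A * |Real.sinh (x / 2)| * coshKernel (A + 1 / 2) x
      ≤ 2 * A * Real.cosh (x / 2) * coshKernel (A + 1 / 2) x :=
        mul_le_mul_of_nonneg_right
          (mul_le_mul_of_nonneg_left (Real.abs_sinh_le_cosh _) (by positivity))
          (coshKernel_pos _ _).le
    _ = A * (2 * Real.cosh (x / 2) * coshKernel (A + 1 / 2) x) := by ring

lemma integrable_deriv_deriv_coshKernel (hA : 0 < A) :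
    Integrable (deriv (deriv (coshKernel A))) := by
  rw [deriv_deriv_coshKernel]
  exact ((integrable_coshKernel hA).const_mul _).sub
    ((integrable_coshKernel (by positivity)).const_mul _)

lemma integral_deriv_deriv_coshKernel_mul_coshKernel (hA : 0 < A) :
    ∫ x, deriv (deriv (coshKernel A)) x * coshKernel A x =
      -(A ^ 2 * Real.Gamma (2 * A) ^ 2 / ((1 + 4 * A) * Real.Gamma (4 * A))) := by
  have hmul (x : ℝ) : deriv (deriv (coshKernel A)) x * coshKernel A x =
      A ^ 2 * coshKernel (2 * A) x - 2 * A * (2 * A + 1) * coshKernel (2 * A + 1) x := by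
    rw [deriv_deriv_coshKernel, sub_mul, mul_assoc, mul_assoc, coshKernel_mul_coshKernel,
      coshKernel_mul_coshKernel]
    ring_nf
  simp_rw [hmul]
  rw [integral_sub ((integrable_coshKernel (by positivity)).const_mul _)
      ((integrable_coshKernel (by positivity)).const_mul _),
    integral_const_mul, integral_const_mul, integral_coshKernel (by positivity),
    integral_coshKernel (by positivity), show 2 * (2 * A + 1) = 4 * A + 1 + 1 by ring,
    show 2 * (2 * A) = 4 * A by ring, Real.Gamma_add_one (by positivity),
    Real.Gamma_add_one (by positivity), Real.Gamma_add_one (by positivity)]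
  have := Real.Gamma_pos_of_pos (by positivity : 0 < 4 * A)
  field_simp
  ring

lemma integral_sq_mul_fourier_coshKernel_sq (hA : 0 < A) :
    ∫ ξ : ℝ, ((2 * π * ξ : ℝ) : ℂ) ^ 2 * 𝓕 (fun x : ℝ ↦ (coshKernel A x : ℂ)) ξ ^ 2 =
      ((A ^ 2 * Real.Gamma (2 * A) ^ 2 / ((1 + 4 * A) * Real.Gamma (4 * A)) : ℝ) : ℂ) := by
  set G : ℝ → ℂ := fun x ↦ coshKernel A x
  set G' : ℝ → ℂ := fun x ↦ (deriv (coshKernel A) x : ℝ)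
  set G'' : ℝ → ℂ := fun x ↦ (deriv (deriv (coshKernel A)) x : ℝ)
  have hG : Integrable G := (integrable_coshKernel hA).ofReal
  have hG' : Integrable G' := (integrable_deriv_coshKernel hA).ofReal
  have hG'' : Integrable G'' := (integrable_deriv_deriv_coshKernel hA).ofReal
  have hd (x : ℝ) : HasDerivAt G (G' x) x :=
    (hasDerivAt_coshKernel A x).differentiableAt.hasDerivAt.ofReal_comp
  have hd' (x : ℝ) : HasDerivAt G' (G'' x) x :=
    (hasDerivAt_deriv_coshKernel A x).differentiableAt.hasDerivAt.ofReal_comp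
  have hFG'' (ξ : ℝ) : 𝓕 G'' ξ = -((2 * π * ξ : ℝ) : ℂ) ^ 2 * 𝓕 G ξ := by
    rw [fourier_eq_of_hasDerivAt hG' hG'' hd', fourier_eq_of_hasDerivAt hG hG' hd]
    push_cast
    linear_combination (2 * π * ξ : ℂ) ^ 2 * 𝓕 G ξ * I_sq
  have hG''G : ∫ ξ, 𝓕 G'' ξ * 𝓕 G ξ = -((A ^ 2 * Real.Gamma (2 * A) ^ 2 /
      ((1 + 4 * A) * Real.Gamma (4 * A)) : ℝ) : ℂ) := by
    rw [integral_fourier_mul_fourier hG (by fun_prop)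
      (integrable_fourier_of_hasDerivAt hG hG' hG'' hd hd') hG'']
    simp only [G, G'', coshKernel_neg, ← ofReal_mul]
    rw [integral_complex_ofReal, integral_deriv_deriv_coshKernel_mul_coshKernel hA, ofReal_neg]
  calc _ = -∫ ξ, 𝓕 G'' ξ * 𝓕 G ξ := by
        rw [← integral_neg]
        congr 1 with ξ
        rw [hFG'']
        ring
    _ = _ := by rw [hG''G, neg_neg]

end

theorem integral_sq_mul_Gamma_mul_Gamma_sq {A : ℝ} (hA : 0 < A) :
    ∫ t : ℝ, (t : ℂ) ^ 2 * (Complex.Gamma (A + I * t) * Complex.Gamma (A - I * t)) ^ 2 =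
      ((2 * π * A ^ 2 * Real.Gamma (2 * A) ^ 4 / ((1 + 4 * A) * Real.Gamma (4 * A)) : ℝ) : ℂ) := by
  set F : ℝ → ℂ := fun t ↦
    (t : ℂ) ^ 2 * (Complex.Gamma (A + I * t) * Complex.Gamma (A - I * t)) ^ 2
  have h := integral_sq_mul_fourier_coshKernel_sq hA
  simp only [fourier_coshKernel hA, div_pow, ← mul_div_assoc, integral_div] at h
  rw [Measure.integral_comp_mul_left F (2 * π), abs_of_pos (inv_pos.2 two_pi_pos), real_smul,
    div_eq_iff (by simpa using (Real.Gamma_pos_of_pos (by positivity : 0 < 2 * A)).ne')] at h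
  calc ∫ t, F t = (2 * π : ℂ) * ((((2 * π)⁻¹ : ℝ) : ℂ) * ∫ t, F t) := by
        push_cast
        field_simp
    _ = _ := by
        rw [h]
        push_cast
        ring

/-- second moment of the `|Γ|⁴` density: for `a, b > 0`,
`(bΓ(4a)/(2πΓ(2a)⁴)) ∫ s² |Γ(a+ibs)|⁴ ds = a²/(b²(1+4a))`. -/
theorem gamma_fourth_power_second_moment (a b : ℝ) (ha : 0 < a) (hb : 0 < b) :
    ((b * Real.Gamma (4 * a) / (2 * Real.pi * (Real.Gamma (2 * a)) ^ 4) : ℝ) : ℂ) *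
      ∫ s : ℝ, (s : ℂ) ^ 2 * (Complex.Gamma (a + Complex.I * (b * s)) *
        Complex.Gamma (a - Complex.I * (b * s))) ^ 2
      = ((a ^ 2 / (b ^ 2 * (1 + 4 * a)) : ℝ) : ℂ) := by
  set F : ℝ → ℂ := fun t ↦
    (t : ℂ) ^ 2 * (Complex.Gamma (a + I * t) * Complex.Gamma (a - I * t)) ^ 2
  have hscale : ∫ s : ℝ, (s : ℂ) ^ 2 * (Complex.Gamma (a + Complex.I * (b * s)) *
      Complex.Gamma (a - Complex.I * (b * s))) ^ 2 = ((b ^ 3)⁻¹ : ℝ) * ∫ t, F t := by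
    calc _ = ((b ^ 2)⁻¹ : ℂ) * ∫ s, F (b * s) := by
          rw [← integral_const_mul]
          congr 1 with s
          have hb' : (b : ℂ) ≠ 0 := ofReal_ne_zero.2 hb.ne'
          simp only [F]
          push_cast
          field_simp
      _ = _ := by
          rw [Measure.integral_comp_mul_left F b, abs_of_pos (inv_pos.2 hb), real_smul]
          push_cast
          ring
  have hΓ₂ := Real.Gamma_pos_of_pos (by positivity : 0 < 2 * a)
  have hΓ₄ := Real.Gamma_pos_of_pos (by positivity : 0 < 4 * a)
  rw [hscale, integral_sq_mul_Gamma_mul_Gamma_sq ha, ← ofReal_mul, ← ofReal_mul]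
  congr 1
  field_simp
end
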